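/- Let 1 < p < ∞ and let a : ℤ → ℝ be a nonnegative sequence in ℓ^p(ℤ) such that Σ_{m∈ℤ} (M_d a(m))^p < ∞. Then there is a constant C depending only on p such that Σ_{m∈ℤ} (M_d a(m))^p ≤ C · Σ_{m∈ℤ} (M^# a(m))^p. -/

import Mathlib

/-!
Good-λ argument of Fefferman and Stein. Since `∑ (M_d a)ᵖ < ∞`, each level set `{M_d a > λ}` is
finite, hence the disjoint union of the maximal dyadic intervals `I` on which the average of `|a|`
exceeds `λ`. The parent `Î` of such an `I` has average at most `λ`, so `|a| ≤ |a - a_Î| + λ`, and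
every point of `I` where `M_d a > 2λ` lies in a dyadic subinterval of `I` on which the average of
`|a - a_Î|` exceeds `λ`. If `M^# a ≤ γλ` somewhere on `I`, the dyadic weak-type (1,1) bound counts
at most `λ⁻¹ ∑_Î |a - a_Î| ≤ 2γ|I|` such points. Hence
`#{M_d a > 2λ, M^# a ≤ γλ} ≤ 2γ #{M_d a > λ}`, and integrating against `p λ^(p-1) dλ` with
`γ = 2^(-(p+2))` gives `2⁻ᵖ ∑ (M_d a)ᵖ ≤ 2^(-(p+1)) ∑ (M_d a)ᵖ + γ⁻ᵖ ∑ (M^# a)ᵖ`; the first term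
on the right is finite and is absorbed into the left.
-/

open scoped ENNReal
open MeasureTheory

/-- An interval in ℤ: a nonempty finite set of consecutive integers. -/
def IsIntervalZ (I : Finset ℤ) : Prop := ∃ n m : ℤ, n ≤ m ∧ I = Finset.Icc n m

/-- The dyadic interval I_{N,j} = {(j-1)2^N + 1, …, j·2^N}. -/
noncomputable def dyadicI (N : ℕ) (j : ℤ) : Finset ℤ := Finset.Icc ((j - 1) * 2 ^ N + 1) (j * 2 ^ N)

/-- A dyadic interval is one of the form I_{N,j} with N a positive integer. -/
def IsDyadicZ (I : Finset ℤ) : Prop := ∃ N : ℕ, 0 < N ∧ ∃ j : ℤ, I = dyadicI N j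

/-- The (uncentered) Hardy–Littlewood maximal operator. -/
noncomputable def Mop (a : ℤ → ℝ) (m : ℤ) : ℝ≥0∞ :=
  ⨆ (I : Finset ℤ) (_ : IsIntervalZ I) (_ : m ∈ I),
    (∑ n ∈ I, ENNReal.ofReal |a n|) / I.card

/-- The centered Hardy–Littlewood maximal operator
`M′a(m) = sup_{r>0} (1/(2r)) ∑_{n=-r}^{r} |a(m-n)|`. -/
noncomputable def Mc (a : ℤ → ℝ) (m : ℤ) : ℝ≥0∞ :=
  ⨆ (r : ℕ) (_ : 0 < r),
    (∑ n ∈ Finset.Icc (-(r : ℤ)) (r : ℤ), ENNReal.ofReal |a (m - n)|) / (2 * (r : ℝ≥0∞))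

/-- The dyadic maximal operator. -/
noncomputable def Md (a : ℤ → ℝ) (m : ℤ) : ℝ≥0∞ :=
  ⨆ (I : Finset ℤ) (_ : IsDyadicZ I) (_ : m ∈ I),
    (∑ k ∈ I, ENNReal.ofReal |a k|) / I.card

/-- The average `a_I` of a sequence on a finite set. -/
noncomputable def avgI (a : ℤ → ℝ) (I : Finset ℤ) : ℝ := (∑ m ∈ I, a m) / I.card

/-- The sharp maximal operator. -/
noncomputable def Msharp (a : ℤ → ℝ) (m : ℤ) : ℝ≥0∞ :=
  ⨆ (I : Finset ℤ) (_ : IsIntervalZ I) (_ : m ∈ I),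
    (∑ n ∈ I, ENNReal.ofReal |a n - avgI a I|) / I.card

open Finset

noncomputable def dyadicCell (m : ℤ) (N : ℕ) : Finset ℤ := dyadicI N ((m - 1) / 2 ^ N + 1)

lemma mem_dyadicI_iff {N : ℕ} {j k : ℤ} : k ∈ dyadicI N j ↔ (k - 1) / 2 ^ N = j - 1 := by
  rw [Int.ediv_eq_iff_of_pos (by positivity), dyadicI, Finset.mem_Icc]
  constructor <;> rintro ⟨h₁, h₂⟩ <;> constructor <;> linarith

lemma mem_dyadicCell_iff {N : ℕ} {k m : ℤ} :
    k ∈ dyadicCell m N ↔ (k - 1) / 2 ^ N = (m - 1) / 2 ^ N := by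
  rw [dyadicCell, mem_dyadicI_iff, add_sub_cancel_right]

lemma mem_dyadicCell_self (m : ℤ) (N : ℕ) : m ∈ dyadicCell m N :=
  mem_dyadicCell_iff.2 rfl

lemma card_dyadicI (N : ℕ) (j : ℤ) : #(dyadicI N j) = 2 ^ N := by
  rw [dyadicI, Int.card_Icc]
  have : j * 2 ^ N + 1 - ((j - 1) * 2 ^ N + 1) = ((2 ^ N : ℕ) : ℤ) := by push_cast; ring
  rw [this, Int.toNat_natCast]

lemma card_dyadicCell (m : ℤ) (N : ℕ) : #(dyadicCell m N) = 2 ^ N := card_dyadicI _ _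

lemma dyadicI_eq_dyadicCell {N : ℕ} {j m : ℤ} (h : m ∈ dyadicI N j) :
    dyadicI N j = dyadicCell m N := by
  rw [mem_dyadicI_iff] at h
  rw [dyadicCell, h, sub_add_cancel]

lemma ediv_two_pow_eq_ediv_ediv (k : ℤ) {N M : ℕ} (h : N ≤ M) :
    k / 2 ^ M = k / 2 ^ N / 2 ^ (M - N) := by
  rw [Int.ediv_ediv, ← pow_add, Nat.add_sub_cancel' h]
  simp [(by positivity : (0 : ℤ) ≤ 2 ^ N).not_gt]

lemma dyadicCell_eq_of_mem {N M : ℕ} {k m : ℤ} (hNM : N ≤ M) (hk : k ∈ dyadicCell m N) :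
    dyadicCell k M = dyadicCell m M := by
  rw [mem_dyadicCell_iff] at hk
  rw [dyadicCell, dyadicCell, ediv_two_pow_eq_ediv_ediv _ hNM, hk,
    ← ediv_two_pow_eq_ediv_ediv _ hNM]

lemma dyadicCell_subset_of_le {N M : ℕ} (m : ℤ) (hNM : N ≤ M) :
    dyadicCell m N ⊆ dyadicCell m M :=
  fun k hk => dyadicCell_eq_of_mem hNM hk ▸ mem_dyadicCell_self k M

lemma isIntervalZ_dyadicCell (m : ℤ) (N : ℕ) : IsIntervalZ (dyadicCell m N) :=
  ⟨_, _, by rw [← Finset.nonempty_Icc]; exact ⟨m, mem_dyadicCell_self m N⟩, rfl⟩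

lemma lt_Md_iff {a : ℤ → ℝ} {m : ℤ} {t : ℝ≥0∞} :
    t < Md a m ↔ ∃ N, 0 < N ∧ t * 2 ^ N < ∑ k ∈ dyadicCell m N, ENNReal.ofReal |a k| := by
  have hcard (N : ℕ) : ((#(dyadicCell m N) : ℕ) : ℝ≥0∞) = 2 ^ N := by
    rw [card_dyadicCell]; push_cast; rfl
  simp only [Md, lt_iSup_iff]
  constructor
  · rintro ⟨I, ⟨N, hN, j, rfl⟩, hm, hlt⟩
    rw [dyadicI_eq_dyadicCell hm, hcard,
      ENNReal.lt_div_iff_mul_lt (by simp) (by simp)] at hlt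
    exact ⟨N, hN, hlt⟩
  · rintro ⟨N, hN, hlt⟩
    refine ⟨dyadicCell m N, ⟨N, hN, _, rfl⟩, mem_dyadicCell_self m N, ?_⟩
    rwa [hcard, ENNReal.lt_div_iff_mul_lt (by simp) (by simp)]

lemma lt_Md_of_mem {a : ℤ → ℝ} {m x : ℤ} {N : ℕ} {t : ℝ≥0∞} (hN : 0 < N)
    (hx : x ∈ dyadicCell m N) (h : t * 2 ^ N < ∑ k ∈ dyadicCell m N, ENNReal.ofReal |a k|) :
    t < Md a x :=
  lt_Md_iff.2 ⟨N, hN, by rwa [dyadicCell_eq_of_mem le_rfl hx]⟩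

lemma sum_div_card_le_Msharp {a : ℤ → ℝ} {m : ℤ} {I : Finset ℤ} (hI : IsIntervalZ I)
    (hm : m ∈ I) :
    (∑ n ∈ I, ENNReal.ofReal |a n - avgI a I|) / #I ≤ Msharp a m :=
  le_iSup₂_of_le I hI (le_iSup_of_le hm le_rfl)

section StoppingCells

open Classical

variable (P : ℕ → Finset ℤ → Prop) (B : ℕ)

noncomputable def stopLevel (m : ℤ) : ℕ :=
  Nat.findGreatest (fun N => P N (dyadicCell m N)) B

noncomputable def stopCell (m : ℤ) : Finset ℤ := dyadicCell m (stopLevel P B m)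

variable {P B}

lemma mem_stopCell_self (m : ℤ) : m ∈ stopCell P B m := mem_dyadicCell_self m _

lemma stopLevel_le (m : ℤ) : stopLevel P B m ≤ B := Nat.findGreatest_le B

lemma stopCell_spec {m : ℤ} {N : ℕ} (hN : N ≤ B) (h : P N (dyadicCell m N)) :
    P (stopLevel P B m) (stopCell P B m) :=
  Nat.findGreatest_spec (P := fun N => P N (dyadicCell m N)) hN h

lemma not_of_stopLevel_lt {m : ℤ} {N : ℕ} (h : stopLevel P B m < N) (hN : N ≤ B) :
    ¬ P N (dyadicCell m N) :=
  Nat.findGreatest_is_greatest h hN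

lemma stopLevel_eq_of_mem {m x : ℤ} {N : ℕ} (hN : N ≤ B) (h : P N (dyadicCell m N))
    (hx : x ∈ stopCell P B m) : stopLevel P B x = stopLevel P B m := by
  have hm := stopCell_spec hN h
  rw [stopCell, ← dyadicCell_eq_of_mem le_rfl hx] at hm
  refine le_antisymm (not_lt.1 fun hlt => ?_) (Nat.le_findGreatest (stopLevel_le m) hm)
  have hx' := stopCell_spec (stopLevel_le m) hm
  rw [stopCell, dyadicCell_eq_of_mem hlt.le hx] at hx'
  exact not_of_stopLevel_lt hlt (stopLevel_le x) hx'

lemma stopCell_eq_of_mem {m x : ℤ} {N : ℕ} (hN : N ≤ B) (h : P N (dyadicCell m N))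
    (hx : x ∈ stopCell P B m) : stopCell P B x = stopCell P B m := by
  rw [stopCell, stopLevel_eq_of_mem hN h hx]
  exact dyadicCell_eq_of_mem le_rfl hx

lemma sum_le_sum_biUnion_stopCell {T : Finset ℤ}
    (hT : ∀ x ∈ T, ∃ N ≤ B, P N (dyadicCell x N)) (g h : ℤ → ℝ≥0∞)
    (hloc : ∀ x ∈ T, ∑ y ∈ T with y ∈ stopCell P B x, g y ≤ ∑ y ∈ stopCell P B x, h y) :
    ∑ x ∈ T, g x ≤ ∑ y ∈ T.biUnion (stopCell P B), h y := by
  have hdisj : (↑(T.image (stopCell P B)) : Set (Finset ℤ)).PairwiseDisjoint id := by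
    rw [coe_image]
    rintro _ ⟨x, hx, rfl⟩ _ ⟨y, hy, rfl⟩ hne
    obtain ⟨N, hN, hPx⟩ := hT x hx
    obtain ⟨M, hM, hPy⟩ := hT y hy
    refine disjoint_left.2 fun z hzx hzy => hne ?_
    exact (stopCell_eq_of_mem hN hPx hzx).symm.trans (stopCell_eq_of_mem hM hPy hzy)
  have hU : T.biUnion (stopCell P B) = (T.image (stopCell P B)).biUnion id := by
    rw [image_biUnion]; rfl
  rw [hU, sum_biUnion hdisj,
    ← sum_fiberwise_of_maps_to fun x hx => mem_image_of_mem (stopCell P B) hx]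
  refine sum_le_sum fun J hJ => ?_
  obtain ⟨x, hx, rfl⟩ := mem_image.1 hJ
  refine le_trans (sum_le_sum_of_subset fun y hy => ?_) (hloc x hx)
  rw [mem_filter] at hy ⊢
  exact ⟨hy.1, hy.2 ▸ mem_stopCell_self y⟩

end StoppingCells

lemma mul_card_le_sum_biUnion_dyadicCell (f : ℤ → ℝ≥0∞) (t : ℝ≥0∞) (B : ℕ) {T : Finset ℤ}
    (hT : ∀ x ∈ T, ∃ N ≤ B, t * 2 ^ N < ∑ k ∈ dyadicCell x N, f k) :
    t * #T ≤ ∑ k ∈ T.biUnion (dyadicCell · B), f k := by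
  set P : ℕ → Finset ℤ → Prop := fun N I => t * 2 ^ N < ∑ k ∈ I, f k
  calc t * #T = ∑ _ ∈ T, t := by rw [sum_const, nsmul_eq_mul, mul_comm]
    _ ≤ ∑ k ∈ T.biUnion (stopCell P B), f k :=
        sum_le_sum_biUnion_stopCell hT _ _ fun x hx => ?_
    _ ≤ _ := sum_le_sum_of_subset
      (biUnion_mono fun x _ => dyadicCell_subset_of_le x (stopLevel_le x))
  obtain ⟨N, hN, hx⟩ := hT x hx
  calc ∑ _ ∈ T with _ ∈ stopCell P B x, t ≤ ∑ _ ∈ stopCell P B x, t :=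
        sum_le_sum_of_subset fun y hy => (mem_filter.1 hy).2
    _ = t * 2 ^ stopLevel P B x := by
        rw [sum_const, stopCell, card_dyadicCell, nsmul_eq_mul, mul_comm]; push_cast; rfl
    _ ≤ _ := (stopCell_spec (P := P) hN hx).le

lemma ofReal_abs_avgI_le {a : ℤ → ℝ} {I : Finset ℤ} {t : ℝ≥0∞}
    (h : ∑ k ∈ I, ENNReal.ofReal |a k| ≤ t * #I) : ENNReal.ofReal |avgI a I| ≤ t := by
  rcases I.eq_empty_or_nonempty with rfl | hI
  · simp [avgI]
  have hcard : (0 : ℝ) < #I := by exact_mod_cast hI.card_pos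
  calc ENNReal.ofReal |avgI a I| ≤ ENNReal.ofReal ((∑ k ∈ I, |a k|) / #I) := by
        rw [avgI, abs_div, Nat.abs_cast]
        gcongr
        exact abs_sum_le_sum_abs _ _
    _ = (∑ k ∈ I, ENNReal.ofReal |a k|) / #I := by
        rw [ENNReal.ofReal_div_of_pos hcard,
          ENNReal.ofReal_sum_of_nonneg fun _ _ => abs_nonneg _, ENNReal.ofReal_natCast]
    _ ≤ t := ENNReal.div_le_of_le_mul h

lemma lt_sum_ofReal_abs_sub {ι : Type*} {a : ι → ℝ} {s : Finset ι} {c : ℝ} {t : ℝ≥0∞} (ht : t ≠ ⊤)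
    (hc : ENNReal.ofReal |c| ≤ t) (h : 2 * t * #s < ∑ k ∈ s, ENNReal.ofReal |a k|) :
    t * #s < ∑ k ∈ s, ENNReal.ofReal |a k - c| := by
  have hle : ∑ k ∈ s, ENNReal.ofReal |a k| ≤ ∑ k ∈ s, ENNReal.ofReal |a k - c| + t * #s :=
    calc ∑ k ∈ s, ENNReal.ofReal |a k|
        ≤ ∑ k ∈ s, (ENNReal.ofReal |a k - c| + ENNReal.ofReal |c|) :=
          sum_le_sum fun k _ => by
            rw [← ENNReal.ofReal_add (abs_nonneg _) (abs_nonneg _)]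
            exact ENNReal.ofReal_le_ofReal (by linarith [abs_sub_abs_le_abs_sub (a k) c])
      _ ≤ ∑ k ∈ s, ENNReal.ofReal |a k - c| + t * #s := by
          rw [sum_add_distrib, sum_const, nsmul_eq_mul, mul_comm]
          gcongr
  rw [two_mul, add_mul] at h
  exact (ENNReal.add_lt_add_iff_right (ENNReal.mul_ne_top ht (by simp))).1 (h.trans_le hle)

lemma card_filter_Msharp_le_of_forall_sum_le {a : ℤ → ℝ} {t : ℝ≥0∞} (γ : ℝ≥0∞)
    (ht0 : t ≠ 0) (ht : t ≠ ⊤) {m : ℤ} {N : ℕ}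
    (hcoarse : ∀ M, N < M → ∑ k ∈ dyadicCell m M, ENNReal.ofReal |a k| ≤ t * 2 ^ M) :
    (#{x ∈ dyadicCell m N | 2 * t < Md a x ∧ Msharp a x ≤ γ * t} : ℝ≥0∞) ≤ 2 * γ * 2 ^ N := by
  set T := {x ∈ dyadicCell m N | 2 * t < Md a x ∧ Msharp a x ≤ γ * t}
  set parent := dyadicCell m (N + 1)
  set c := avgI a parent
  have hcard (x : ℤ) (M : ℕ) : ((#(dyadicCell x M) : ℕ) : ℝ≥0∞) = 2 ^ M := by
    rw [card_dyadicCell]; push_cast; rfl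
  have hc : ENNReal.ofReal |c| ≤ t :=
    ofReal_abs_avgI_le (by rw [hcard]; exact hcoarse (N + 1) N.lt_succ_self)
  have hheavy :
      ∀ x ∈ T, ∃ M ≤ N, t * 2 ^ M < ∑ k ∈ dyadicCell x M, ENNReal.ofReal |a k - c| := by
    intro x hx
    obtain ⟨hxm, hxMd, -⟩ := mem_filter.1 hx
    obtain ⟨M, -, hM⟩ := lt_Md_iff.1 hxMd
    have hMN : M ≤ N := not_lt.1 fun hNM => by
      rw [dyadicCell_eq_of_mem hNM.le hxm] at hM
      have ht2 : t * 2 ^ M ≤ 2 * t * 2 ^ M := by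
        gcongr; exact le_mul_of_one_le_left zero_le one_le_two
      exact (hcoarse M hNM).not_gt (ht2.trans_lt hM)
    refine ⟨M, hMN, ?_⟩
    rw [← hcard x M] at hM ⊢
    exact lt_sum_ofReal_abs_sub ht hc hM
  rcases T.eq_empty_or_nonempty with hT | ⟨x₀, hx₀⟩
  · simp [hT]
  have hsub : T.biUnion (dyadicCell · N) ⊆ parent := biUnion_subset.2 fun x hx => by
    rw [dyadicCell_eq_of_mem le_rfl (filter_subset _ _ hx)]
    exact dyadicCell_subset_of_le m N.le_succ
  have hsharp : ∑ k ∈ parent, ENNReal.ofReal |a k - c| ≤ γ * t * 2 ^ (N + 1) := by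
    have h := (sum_div_card_le_Msharp (a := a) (isIntervalZ_dyadicCell m (N + 1))
      (hsub (mem_biUnion.2 ⟨x₀, hx₀, mem_dyadicCell_self x₀ N⟩))).trans
      (mem_filter.1 hx₀).2.2
    rwa [hcard, ENNReal.div_le_iff_le_mul (by simp) (by simp)] at h
  have hmain : t * #T ≤ t * (2 * γ * 2 ^ N) :=
    calc t * #T ≤ ∑ k ∈ T.biUnion (dyadicCell · N), ENNReal.ofReal |a k - c| :=
          mul_card_le_sum_biUnion_dyadicCell _ t N hheavy
      _ ≤ ∑ k ∈ parent, ENNReal.ofReal |a k - c| := sum_le_sum_of_subset hsub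
      _ ≤ γ * t * 2 ^ (N + 1) := hsharp
      _ = t * (2 * γ * 2 ^ N) := by ring
  exact (ENNReal.mul_le_mul_iff_right ht0 ht).1 hmain

lemma exists_forall_sum_le_of_finite {a : ℤ → ℝ} {t : ℝ≥0∞} (hE : {m | t < Md a m}.Finite) :
    ∃ B : ℕ, ∀ m N, B < N → ∑ k ∈ dyadicCell m N, ENNReal.ofReal |a k| ≤ t * 2 ^ N := by
  refine ⟨#hE.toFinset, fun m N hN => not_lt.1 fun hlt => ?_⟩
  have hsub : dyadicCell m N ⊆ hE.toFinset := fun x hx => by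
    simpa using lt_Md_of_mem (by omega) hx hlt
  have h := card_le_card hsub
  rw [card_dyadicCell] at h
  have := N.lt_two_pow_self
  omega

theorem count_Md_Msharp_le (a : ℤ → ℝ) {t : ℝ≥0∞} (γ : ℝ≥0∞) (ht0 : t ≠ 0) (ht : t ≠ ⊤)
    (hE : {m | t < Md a m}.Finite) :
    Measure.count {m | 2 * t < Md a m ∧ Msharp a m ≤ γ * t}
      ≤ 2 * γ * Measure.count {m | t < Md a m} := by
  obtain ⟨B, hB⟩ := exists_forall_sum_le_of_finite hE
  set P : ℕ → Finset ℤ → Prop := fun N I => 0 < N ∧ t * 2 ^ N < ∑ k ∈ I, ENNReal.ofReal |a k|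
  have hsel : ∀ x, t < Md a x → ∃ N ≤ B, P N (dyadicCell x N) := fun x hx => by
    obtain ⟨N, hN, hlt⟩ := lt_Md_iff.1 hx
    exact ⟨N, not_lt.1 fun h => (hB x N h).not_gt hlt, hN, hlt⟩
  have hGE : {m | 2 * t < Md a m ∧ Msharp a m ≤ γ * t} ⊆ {m | t < Md a m} :=
    fun x hx => lt_of_le_of_lt (le_mul_of_one_le_left zero_le one_le_two) hx.1
  have hG := hE.subset hGE
  set T := hG.toFinset
  have hloc : ∀ x ∈ T, ∑ y ∈ T with y ∈ stopCell P B x, (1 : ℝ≥0∞)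
      ≤ ∑ y ∈ stopCell P B x, 2 * γ := fun x _ => by
    have hcoarse : ∀ M, stopLevel P B x < M →
        ∑ k ∈ dyadicCell x M, ENNReal.ofReal |a k| ≤ t * 2 ^ M := fun M hM => by
      rcases le_or_gt M B with hMB | hMB
      · exact not_lt.1 fun hlt => not_of_stopLevel_lt hM hMB ⟨by omega, hlt⟩
      · exact hB x M hMB
    have hsub : {y ∈ T | y ∈ stopCell P B x}
        ⊆ {y ∈ stopCell P B x | 2 * t < Md a y ∧ Msharp a y ≤ γ * t} := fun y hy => by
      rw [mem_filter, Set.Finite.mem_toFinset] at hy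
      exact mem_filter.2 ⟨hy.2, hy.1⟩
    rw [sum_const, sum_const, nsmul_one, nsmul_eq_mul, stopCell, card_dyadicCell, mul_comm]
    push_cast
    exact (Nat.cast_le.2 (card_le_card hsub)).trans
      (card_filter_Msharp_le_of_forall_sum_le γ ht0 ht hcoarse)
  have hcount := sum_le_sum_biUnion_stopCell
    (fun x hx => hsel x (hGE ((Set.Finite.mem_toFinset hG).1 hx))) _ _ hloc
  have hU : T.biUnion (stopCell P B) ⊆ hE.toFinset := biUnion_subset.2 fun x hx y hy => by
    obtain ⟨N, hN, hPx⟩ := hsel x (hGE ((Set.Finite.mem_toFinset hG).1 hx))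
    obtain ⟨hpos, hlt⟩ := stopCell_spec hN hPx
    simpa using lt_Md_of_mem hpos hy hlt
  rw [Measure.count_apply_finite _ hG, Measure.count_apply_finite _ hE]
  calc (#T : ℝ≥0∞) = ∑ _ ∈ T, 1 := by rw [sum_const, nsmul_one]
    _ ≤ ∑ _ ∈ T.biUnion (stopCell P B), 2 * γ := hcount
    _ ≤ ∑ _ ∈ hE.toFinset, 2 * γ := sum_le_sum_of_subset hU
    _ = 2 * γ * #hE.toFinset := by rw [sum_const, nsmul_eq_mul, mul_comm]

section LayerCake

variable {α : Type*} [MeasurableSpace α] (μ : Measure α) {p : ℝ}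

lemma lintegral_rpow_eq_lintegral_meas_ofReal_lt_mul {F : α → ℝ≥0∞} (hF : AEMeasurable F μ)
    (hF_top : ∀ x, F x ≠ ⊤) (hp : 0 < p) :
    ∫⁻ x, F x ^ p ∂μ = ENNReal.ofReal p *
      ∫⁻ t in Set.Ioi 0, μ {x | ENNReal.ofReal t < F x} * ENNReal.ofReal (t ^ (p - 1)) := by
  have h := lintegral_rpow_eq_lintegral_meas_lt_mul μ
    (Filter.Eventually.of_forall fun x => ENNReal.toReal_nonneg) hF.ennreal_toReal hp
  convert h using 2
  · ext x
    rw [← ENNReal.ofReal_rpow_of_nonneg ENNReal.toReal_nonneg hp.le,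
      ENNReal.ofReal_toReal (hF_top _)]
  · refine setLIntegral_congr_fun measurableSet_Ioi fun t ht => ?_
    simp_rw [ENNReal.ofReal_lt_iff_lt_toReal (Set.mem_Ioi.1 ht).le (hF_top _)]

lemma antitone_meas_ofReal_lt (F : α → ℝ≥0∞) :
    Antitone fun t : ℝ => μ {x | ENNReal.ofReal t < F x} :=
  fun _ _ hst => measure_mono fun _ hx => lt_of_le_of_lt (ENNReal.ofReal_le_ofReal hst) hx

lemma lintegral_rpow_le_of_meas_lt_le {F G H : α → ℝ≥0∞} (hF : AEMeasurable F μ)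
    (hG : AEMeasurable G μ) (hH : AEMeasurable H μ) (hF_top : ∀ x, F x ≠ ⊤)
    (hG_top : ∀ x, G x ≠ ⊤) (hH_top : ∀ x, H x ≠ ⊤) (hp : 0 < p) (ε : ℝ≥0∞)
    (h : ∀ s : ℝ≥0∞, s ≠ 0 → s ≠ ⊤ →
      μ {x | s < F x} ≤ ε * μ {x | s < G x} + μ {x | s < H x}) :
    ∫⁻ x, F x ^ p ∂μ ≤ ε * ∫⁻ x, G x ^ p ∂μ + ∫⁻ x, H x ^ p ∂μ := by
  have hw : Measurable fun t : ℝ => ENNReal.ofReal (t ^ (p - 1)) :=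
    (measurable_id.pow_const _).ennreal_ofReal
  have hGw :
      Measurable fun t : ℝ => μ {x | ENNReal.ofReal t < G x} * ENNReal.ofReal (t ^ (p - 1)) :=
    (antitone_meas_ofReal_lt μ G).measurable.mul hw
  rw [lintegral_rpow_eq_lintegral_meas_ofReal_lt_mul μ hF hF_top hp,
    lintegral_rpow_eq_lintegral_meas_ofReal_lt_mul μ hG hG_top hp,
    lintegral_rpow_eq_lintegral_meas_ofReal_lt_mul μ hH hH_top hp, mul_left_comm, ← mul_add,
    ← lintegral_const_mul ε hGw, ← lintegral_add_left (hGw.const_mul ε)]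
  refine mul_le_mul_right (setLIntegral_mono
    ((hGw.const_mul ε).add ((antitone_meas_ofReal_lt μ H).measurable.mul hw)) fun t ht => ?_) _
  calc μ {x | ENNReal.ofReal t < F x} * ENNReal.ofReal (t ^ (p - 1))
      ≤ (ε * μ {x | ENNReal.ofReal t < G x} + μ {x | ENNReal.ofReal t < H x}) *
          ENNReal.ofReal (t ^ (p - 1)) := by
        gcongr
        exact h _ (ENNReal.ofReal_pos.2 ht).ne' ENNReal.ofReal_ne_top
    _ = _ := by simp only [Pi.add_apply, Pi.mul_apply, add_mul, mul_assoc]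

end LayerCake

theorem lintegral_rpow_le_of_good_lambda {α : Type*} [MeasurableSpace α] (μ : Measure α)
    {f g : α → ℝ≥0∞} (hf : AEMeasurable f μ) (hg : AEMeasurable g μ) (hf_top : ∀ x, f x ≠ ⊤)
    (hg_top : ∀ x, g x ≠ ⊤) {p : ℝ} (hp : 0 < p) {γ ε : ℝ≥0∞} (hγ0 : γ ≠ 0)
    (hε : 2 ^ p * ε ≤ 2⁻¹)
    (hgood : ∀ s, s ≠ 0 → s ≠ ⊤ → μ {x | 2 * s < f x ∧ g x ≤ γ * s} ≤ ε * μ {x | s < f x})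
    (hfin : ∫⁻ x, f x ^ p ∂μ ≠ ⊤) :
    ∫⁻ x, f x ^ p ∂μ ≤ 2 * 2 ^ p * γ⁻¹ ^ p * ∫⁻ x, g x ^ p ∂μ := by
  have hdist (s : ℝ≥0∞) (hs0 : s ≠ 0) (hs : s ≠ ⊤) :
      μ {x | s < f x / 2} ≤ ε * μ {x | s < f x} + μ {x | s < g x / γ} := by
    have hsplit : {x | s < f x / 2} ⊆ {x | 2 * s < f x ∧ g x ≤ γ * s} ∪ {x | s < g x / γ} := by
      intro x hx
      simp only [Set.mem_ofPred_eq, Set.mem_union,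
        ENNReal.lt_div_iff_mul_lt (.inl two_ne_zero) (.inl ENNReal.ofNat_ne_top),
        ENNReal.lt_div_iff_mul_lt (.inl hγ0) (.inr hs0), mul_comm s] at hx ⊢
      exact (le_or_gt (g x) (γ * s)).imp (And.intro hx) id
    calc μ {x | s < f x / 2}
        ≤ μ {x | 2 * s < f x ∧ g x ≤ γ * s} + μ {x | s < g x / γ} :=
          (measure_mono hsplit).trans (measure_union_le _ _)
      _ ≤ ε * μ {x | s < f x} + μ {x | s < g x / γ} := by gcongr; exact hgood s hs0 hs
  have h := lintegral_rpow_le_of_meas_lt_le μ (hf.div_const 2) hf (hg.div_const γ)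
    (fun x => ENNReal.div_ne_top (hf_top x) two_ne_zero) hf_top
    (fun x => ENNReal.div_ne_top (hg_top x) hγ0) hp ε hdist
  simp only [div_eq_mul_inv, ENNReal.mul_rpow_of_nonneg _ _ hp.le] at h
  rw [lintegral_mul_const' _ _ (ENNReal.rpow_ne_top_of_nonneg hp.le (by simp)),
    lintegral_mul_const' _ _
      (ENNReal.rpow_ne_top_of_nonneg hp.le (ENNReal.inv_ne_top.2 hγ0))] at h
  set I := ∫⁻ x, f x ^ p ∂μ
  set J := ∫⁻ x, g x ^ p ∂μ
  have h2 : (2 : ℝ≥0∞) ^ p * 2⁻¹ ^ p = 1 := by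
    rw [← ENNReal.mul_rpow_of_nonneg _ _ hp.le, ENNReal.mul_inv_cancel two_ne_zero
      ENNReal.ofNat_ne_top, ENNReal.one_rpow]
  have habsorb : I / 2 + I / 2 ≤ I / 2 + 2 ^ p * γ⁻¹ ^ p * J :=
    calc I / 2 + I / 2 = 2 ^ p * (I * 2⁻¹ ^ p) := by
          rw [ENNReal.add_halves, mul_left_comm, h2, mul_one]
      _ ≤ 2 ^ p * (ε * I + J * γ⁻¹ ^ p) := by gcongr
      _ = 2 ^ p * ε * I + 2 ^ p * γ⁻¹ ^ p * J := by ring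
      _ ≤ 2⁻¹ * I + 2 ^ p * γ⁻¹ ^ p * J := by gcongr
      _ = I / 2 + 2 ^ p * γ⁻¹ ^ p * J := by rw [ENNReal.div_eq_inv_mul]
  have := (ENNReal.add_le_add_iff_left (ENNReal.div_ne_top hfin two_ne_zero)).1 habsorb
  rw [ENNReal.div_le_iff_le_mul (.inl two_ne_zero) (.inl ENNReal.ofNat_ne_top)] at this
  calc I ≤ 2 ^ p * γ⁻¹ ^ p * J * 2 := this
    _ = 2 * 2 ^ p * γ⁻¹ ^ p * J := by ring

lemma ne_top_of_tsum_rpow_ne_top {ι : Type*} {f : ι → ℝ≥0∞} {p : ℝ} (hp : 0 < p)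
    (h : ∑' i, f i ^ p ≠ ⊤) (i : ι) : f i ≠ ⊤ :=
  fun hi => h (ENNReal.tsum_eq_top_of_eq_top ⟨i, by simp [hi, hp]⟩)

lemma finite_setOf_lt_of_tsum_rpow_ne_top {ι : Type*} {f : ι → ℝ≥0∞} {p : ℝ} (hp : 0 < p)
    (h : ∑' i, f i ^ p ≠ ⊤) {s : ℝ≥0∞} (hs : s ≠ 0) : {i | s < f i}.Finite :=
  (ENNReal.finite_const_le_of_tsum_ne_top h (by simp [ENNReal.rpow_eq_zero_iff, hs, hp.le])).subset
    fun _ hi => ENNReal.rpow_le_rpow hi.le hp.le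

/-- `∑ (M_d a)ᵖ ≤ C ∑ (M^# a)ᵖ` for nonnegative `a ∈ ℓᵖ(ℤ)`, with `C` depending only on `p`. -/
theorem statement7 (p : ℝ) (hp1 : 1 < p) :
    ∃ C : ℝ≥0∞, 0 < C ∧ C ≠ ⊤ ∧
      ∀ a : ℤ → ℝ, (∀ m : ℤ, 0 ≤ a m) → (Summable fun m : ℤ => |a m| ^ p) →
        (∑' m : ℤ, Md a m ^ p) ≠ ⊤ →
        ∑' m : ℤ, Md a m ^ p ≤ C * ∑' m : ℤ, Msharp a m ^ p := by
  have hp : 0 < p := by linarith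
  set γ : ℝ≥0∞ := 2 ^ (-(p + 2))
  have hγ0 : γ ≠ 0 := by simp [γ, ENNReal.rpow_eq_zero_iff]
  have hγ : γ ≠ ⊤ := by simp [γ, ENNReal.rpow_eq_top_iff]
  have hε : 2 ^ p * (2 * γ) = 2⁻¹ :=
    calc 2 ^ p * (2 * γ) = 2 ^ p * (2 ^ (1 : ℝ) * 2 ^ (-(p + 2))) := by rw [ENNReal.rpow_one]
      _ = 2 ^ (p + (1 + -(p + 2))) := by
        rw [ENNReal.rpow_add _ _ two_ne_zero ENNReal.ofNat_ne_top,
          ENNReal.rpow_add _ _ two_ne_zero ENNReal.ofNat_ne_top]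
      _ = 2⁻¹ := by rw [show p + (1 + -(p + 2)) = -1 by ring, ENNReal.rpow_neg_one]
  have hC0 : 2 * 2 ^ p * γ⁻¹ ^ p ≠ 0 := by simp [ENNReal.rpow_eq_zero_iff, hp, hp.not_gt, hγ]
  refine ⟨_, pos_iff_ne_zero.2 hC0, by finiteness, fun a _ _ hK => ?_⟩
  by_cases hS : ∑' m, Msharp a m ^ p = ⊤
  · simp [hS, ENNReal.mul_top hC0]
  rw [← lintegral_count, ← lintegral_count]
  exact lintegral_rpow_le_of_good_lambda Measure.count (measurable_of_countable _).aemeasurable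
    (measurable_of_countable _).aemeasurable (ne_top_of_tsum_rpow_ne_top hp hK)
    (ne_top_of_tsum_rpow_ne_top hp hS) hp hγ0 hε.le
    (fun s hs0 hs => count_Md_Msharp_le a γ hs0 hs (finite_setOf_lt_of_tsum_rpow_ne_top hp hK hs0))
    (by rwa [lintegral_count])
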